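/- arXiv:1209.2579 — 7 statements merged into one kernel-verified Lean document; each statement's English description precedes it below -/
import Mathlib

section
/- If a finite ranked poset P is partitioned into subposets P_1, ..., P_m, each of which is saturated and symmetric in P and each of which admits a symmetric chain decomposition, then P admits a symmetric chain decomposition. -/
namespace PaperSCD

variable {β : Type*}

/-- `x` is covered by `y` with respect to the order relation `le`. -/
def Covers (le : β → β → Prop) (x y : β) : Prop :=
  le x y ∧ x ≠ y ∧ ∀ z, le x z → le z y → z = x ∨ z = y

/-- `r` is a rank function for the order `le`: covers raise rank by one and
minimal elements have rank zero. -/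
def IsRankFn (le : β → β → Prop) (r : β → ℕ) : Prop :=
  (∀ x y, Covers le x y → r y = r x + 1) ∧ ∀ x, (∀ y, le y x → y = x) → r x = 0

/-- `C` is a chain with respect to `le`. -/
def IsChn (le : β → β → Prop) (C : Set β) : Prop :=
  ∀ x ∈ C, ∀ y ∈ C, le x y ∨ le y x

/-- `x` is covered by `y` inside the subposet `S`. -/
def CoversIn (le : β → β → Prop) (S : Set β) (x y : β) : Prop :=
  x ∈ S ∧ y ∈ S ∧ le x y ∧ x ≠ y ∧ ∀ z ∈ S, le x z → le z y → z = x ∨ z = y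

/-- The chain `C` is saturated in the ambient order: consecutive elements of `C`
are covers in the ambient order. -/
def SatChn (le : β → β → Prop) (C : Set β) : Prop :=
  ∀ x ∈ C, ∀ y ∈ C, CoversIn le C x y → Covers le x y

/-- `C` is a nonempty saturated chain which is symmetric for rank function `r`
in a poset of rank `R`. -/
def IsSymmSatChain (le : β → β → Prop) (r : β → ℕ) (R : ℕ) (C : Set β) : Prop :=
  C.Nonempty ∧ IsChn le C ∧ SatChn le C ∧
    ∃ a ∈ C, ∃ b ∈ C, (∀ x ∈ C, le a x ∧ le x b) ∧ r a + r b = R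

/-- `𝒟` is a symmetric chain decomposition. -/
def IsSCD (le : β → β → Prop) (r : β → ℕ) (R : ℕ) (𝒟 : Set (Set β)) : Prop :=
  (∀ C ∈ 𝒟, IsSymmSatChain le r R C) ∧ ∀ x : β, ∃! C, C ∈ 𝒟 ∧ x ∈ C

/-- The order `le` is a symmetric chain order. -/
def IsSCO (le : β → β → Prop) : Prop :=
  ∃ (r : β → ℕ) (R : ℕ) (𝒟 : Set (Set β)),
    IsRankFn le r ∧ (∀ x, r x ≤ R) ∧ (Nonempty β → ∃ x, r x = R) ∧ IsSCD le r R 𝒟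

/-- The quotient order on `Quot rel`: `[x] ≤ [y]` iff some representatives are comparable. -/
def qle (rel : β → β → Prop) (le : β → β → Prop) (a b : Quot rel) : Prop :=
  ∃ x y : β, Quot.mk rel x = a ∧ Quot.mk rel y = b ∧ le x y

/-- The permutation `(i, r) ↦ (ρ_r i, τ r)` of `[k] × [t]`. -/
def wrPerm {k t : ℕ} (ρ : Fin t → Equiv.Perm (Fin k)) (τ : Equiv.Perm (Fin t)) :
    Equiv.Perm (Fin k × Fin t) where
  toFun p := (ρ p.2 p.1, τ p.2)
  invFun p := ((ρ (τ.symm p.2)).symm p.1, τ.symm p.2)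
  left_inv := by rintro ⟨i, r⟩; simp
  right_inv := by rintro ⟨i, r⟩; simp

/-- The wreath product `K ≀ T` as a set of permutations of `[k] × [t]`. -/
def wreathSet {k t : ℕ} (K : Subgroup (Equiv.Perm (Fin k))) (T : Subgroup (Equiv.Perm (Fin t))) :
    Set (Equiv.Perm (Fin k × Fin t)) :=
  { φ | ∃ ρ τ, (∀ r, ρ r ∈ K) ∧ τ ∈ T ∧ φ = wrPerm ρ τ }

/-- A subgroup of a permutation group is generated by powers of pairwise disjoint cycles. -/
def GenByPowersOfDisjointCycles {α : Type*} (T : Subgroup (Equiv.Perm α)) : Prop :=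
  ∃ (m : ℕ) (σ : Fin m → Equiv.Perm α) (e : Fin m → ℕ),
    (∀ i, (σ i).IsCycle) ∧ (∀ i j, i ≠ j → (σ i).Disjoint (σ j)) ∧
    T = Subgroup.closure (Set.range fun i => σ i ^ e i)

/-- The `r`-th column of a subset of `[k] × [t]`, identified with a subset of `[k]`. -/
def col {k t : ℕ} (X : Finset (Fin k × Fin t)) (r : Fin t) : Finset (Fin k) :=
  (X.filter fun p => p.2 = r).image Prod.fst

/-- Orbit relation of `K ≤ S_k` on subsets of `[k]`. -/
def relK {k : ℕ} (K : Subgroup (Equiv.Perm (Fin k))) :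
    Finset (Fin k) → Finset (Fin k) → Prop :=
  fun A B => ∃ g ∈ K, A.image ⇑g = B

/-- Orbit relation of the wreath product `K ≀ T` on subsets of `[k] × [t]`. -/
def relW {k t : ℕ} (K : Subgroup (Equiv.Perm (Fin k))) (T : Subgroup (Equiv.Perm (Fin t))) :
    Finset (Fin k × Fin t) → Finset (Fin k × Fin t) → Prop :=
  fun X Y => ∃ φ ∈ wreathSet K T, X.image ⇑φ = Y

/-- The rank (cardinality of a representative) on `B_k/K`. -/
def qrank {k : ℕ} (K : Subgroup (Equiv.Perm (Fin k))) : Quot (relK K) → ℕ :=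
  Quot.lift Finset.card (by
    rintro A B ⟨g, -, rfl⟩
    exact (Finset.card_image_of_injective A g.injective).symm)

/-- The coordinate-permuting action `σ • f = f ∘ σ⁻¹`. -/
def actF {n : ℕ} {γ : Type*} (σ : Equiv.Perm (Fin n)) (f : Fin n → γ) : Fin n → γ :=
  fun i => f (σ.symm i)

/-- `τ` stabilizes `j̄` under the coordinate-permuting action. -/
def ActStab {t s : ℕ} (τ : Equiv.Perm (Fin t)) (j : Fin t → Fin s) : Prop :=
  ∀ r, j (τ.symm r) = j r

end PaperSCD
open PaperSCD

/-!
The chains of the given decompositions of the parts, taken together, decompose `P`. A chain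
that is saturated in a saturated part is saturated in `P`, and its endpoint ranks add up to those
of the part's extremes, which add up to `r(P)` because the part is symmetric.
-/

namespace PaperSCD

variable {β ι : Type*}

theorem satChn_of_subset {le : β → β → Prop} {S C : Set β}
    (hS : ∀ x ∈ S, ∀ y ∈ S, CoversIn le S x y → Covers le x y) (hCS : C ⊆ S)
    (hC : ∀ x ∈ C, ∀ y ∈ C, CoversIn le C x y → CoversIn le S x y) : SatChn le C :=
  fun x hx y hy hxy => hS x (hCS hx) y (hCS hy) (hC x hx y hy hxy)

theorem existsUnique_mem_iUnion_of_partition {P : ι → Set β} {D : ι → Set (Set β)}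
    (hpart : ∀ x, ∃! i, x ∈ P i) (hsub : ∀ i, ∀ C ∈ D i, C ⊆ P i)
    (hD : ∀ i, ∀ x ∈ P i, ∃! C, C ∈ D i ∧ x ∈ C) (x : β) :
    ∃! C, C ∈ ⋃ i, D i ∧ x ∈ C := by
  obtain ⟨i, hxi, hi⟩ := hpart x
  obtain ⟨C, ⟨hC, hxC⟩, hCu⟩ := hD i x hxi
  refine ⟨C, ⟨Set.mem_iUnion.2 ⟨i, hC⟩, hxC⟩, ?_⟩
  rintro C' ⟨hC', hxC'⟩
  obtain ⟨j, hC'j⟩ := Set.mem_iUnion.1 hC'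
  obtain rfl : j = i := hi j (hsub j C' hC'j hxC')
  exact hCu C' ⟨hC'j, hxC'⟩

end PaperSCD

theorem stmt_0_general {β : Type*} (le : β → β → Prop)
    (r : β → ℕ) (R : ℕ)
    {m : ℕ} (P : Fin m → Set β)
    (hpart : ∀ x : β, ∃! i : Fin m, x ∈ P i)
    (hsat : ∀ i, ∀ x ∈ P i, ∀ y ∈ P i, CoversIn le (P i) x y → Covers le x y)
    (hsym : ∀ i, ∃ a ∈ P i, ∃ b ∈ P i, (∀ x ∈ P i, le a x ∧ le x b) ∧ r a + r b = R)
    (hscd : ∀ i, ∃ 𝒟 : Set (Set β),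
      (∀ C ∈ 𝒟, C ⊆ P i ∧ C.Nonempty ∧ IsChn le C ∧
        (∀ x ∈ C, ∀ y ∈ C, CoversIn le C x y → CoversIn le (P i) x y) ∧
        ∃ c ∈ C, ∃ d ∈ C, (∀ x ∈ C, le c x ∧ le x d) ∧
          ∀ a ∈ P i, ∀ b ∈ P i, (∀ x ∈ P i, le a x ∧ le x b) → r c + r d = r a + r b) ∧
      (∀ x ∈ P i, ∃! C, C ∈ 𝒟 ∧ x ∈ C)) :
    ∃ 𝒟 : Set (Set β), IsSCD le r R 𝒟 := by
  choose D hD hcover using hscd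
  refine ⟨⋃ i, D i, ?_,
    existsUnique_mem_iUnion_of_partition hpart (fun i C hC => (hD i C hC).1) hcover⟩
  intro C hC
  obtain ⟨i, hCi⟩ := Set.mem_iUnion.1 hC
  obtain ⟨hsub, hne, hchn, hcov, c, hc, d, hd, hcd, hrank⟩ := hD i C hCi
  obtain ⟨a, ha, b, hb, hab, habR⟩ := hsym i
  exact ⟨hne, hchn, satChn_of_subset (hsat i) hsub hcov, c, hc, d, hd, hcd,
    (hrank a ha b hb hab).trans habR⟩

/-- If a finite ranked poset is partitioned into saturated symmetric
subposets, each admitting a symmetric chain decomposition (relative to the induced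
order and rank), then the poset admits a symmetric chain decomposition. -/
theorem stmt_0 {β : Type*} [Fintype β] (le : β → β → Prop)
    (hrefl : ∀ x, le x x) (hantisymm : ∀ x y, le x y → le y x → x = y)
    (htrans : ∀ x y z, le x y → le y z → le x z)
    (r : β → ℕ) (R : ℕ) (hr : IsRankFn le r) (hR : ∀ x, r x ≤ R)
    (hRtop : Nonempty β → ∃ x, r x = R)
    {m : ℕ} (P : Fin m → Set β)
    (hpart : ∀ x : β, ∃! i : Fin m, x ∈ P i)
    (hsat : ∀ i, ∀ x ∈ P i, ∀ y ∈ P i, CoversIn le (P i) x y → Covers le x y)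
    (hsym : ∀ i, ∃ a ∈ P i, ∃ b ∈ P i, (∀ x ∈ P i, le a x ∧ le x b) ∧ r a + r b = R)
    (hscd : ∀ i, ∃ 𝒟 : Set (Set β),
      (∀ C ∈ 𝒟, C ⊆ P i ∧ C.Nonempty ∧ IsChn le C ∧
        (∀ x ∈ C, ∀ y ∈ C, CoversIn le C x y → CoversIn le (P i) x y) ∧
        ∃ c ∈ C, ∃ d ∈ C, (∀ x ∈ C, le c x ∧ le x d) ∧
          ∀ a ∈ P i, ∀ b ∈ P i, (∀ x ∈ P i, le a x ∧ le x b) → r c + r d = r a + r b) ∧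
      (∀ x ∈ P i, ∃! C, C ∈ 𝒟 ∧ x ∈ C)) :
    ∃ 𝒟 : Set (Set β), IsSCD le r R 𝒟 :=
  stmt_0_general le r R P hpart hsat hsym hscd
end

section
/- For any finite ranked poset P, any subgroup G of Aut(P), and any x in P, the rank of the orbit [x]_G in the quotient poset P/G equals the rank of x in P. -/
open PaperSCD

/-- Orbit relation of a subgroup of automorphisms on the points. -/
def orbRel {β : Type*} (G : Subgroup (Equiv.Perm β)) : β → β → Prop :=
  fun x y => ∃ g ∈ G, g x = y

/-- There is a strictly increasing chain of length `n` (w.r.t. `lt`) ending at `x`. -/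
def HasChainTo {γ : Type*} (lt : γ → γ → Prop) (x : γ) (n : ℕ) : Prop :=
  ∃ f : Fin (n + 1) → γ, f (Fin.last n) = x ∧ ∀ i : Fin n, lt (f i.castSucc) (f i.succ)

namespace HasChainTo

variable {γ δ : Type*} {lt : γ → γ → Prop}

theorem snoc {x y : γ} {n : ℕ} (h : HasChainTo lt x n) (hxy : lt x y) :
    HasChainTo lt y (n + 1) := by
  obtain ⟨f, hlast, hstep⟩ := h
  refine ⟨Fin.snoc f y, Fin.snoc_last _ _, Fin.lastCases ?_ fun j => ?_⟩
  · simpa [Fin.succ_last, hlast] using hxy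
  · rw [Fin.succ_castSucc, Fin.snoc_castSucc, Fin.snoc_castSucc]
    exact hstep j

theorem map {lt' : δ → δ → Prop} (F : γ → δ) (hF : ∀ a b, lt a b → lt' (F a) (F b))
    {x : γ} {n : ℕ} (h : HasChainTo lt x n) : HasChainTo lt' (F x) n := by
  obtain ⟨f, hlast, hstep⟩ := h
  exact ⟨F ∘ f, by simp [hlast], fun i => hF _ _ (hstep i)⟩

end HasChainTo

section OrbitQuotient

variable {β : Type*} {G : Subgroup (Equiv.Perm β)}

theorem orbRel_equivalence (G : Subgroup (Equiv.Perm β)) : Equivalence (orbRel G) where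
  refl _ := ⟨1, G.one_mem, rfl⟩
  symm := by rintro x _ ⟨g, hg, rfl⟩; exact ⟨g⁻¹, G.inv_mem hg, g.symm_apply_apply x⟩
  trans := by rintro _ _ _ ⟨g, hg, rfl⟩ ⟨h, hh, rfl⟩; exact ⟨h * g, G.mul_mem hh hg, rfl⟩

theorem orbRel_of_mk_eq_mk {a b : β} (h : Quot.mk (orbRel G) a = Quot.mk (orbRel G) b) :
    orbRel G a b :=
  (orbRel_equivalence G).eqvGen_iff.mp (Quot.eq.mp h)

theorem mk_apply_eq_mk {g : Equiv.Perm β} (hg : g ∈ G) (a : β) :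
    Quot.mk (orbRel G) (g a) = Quot.mk (orbRel G) a :=
  (Quot.sound ⟨g, hg, rfl⟩).symm

variable [PartialOrder β] (hG : ∀ g ∈ G, ∀ x y : β, x ≤ y ↔ g x ≤ g y)
include hG

theorem apply_lt_apply_of_lt {g : Equiv.Perm β} (hg : g ∈ G) {a b : β} (hab : a < b) :
    g a < g b :=
  lt_of_le_of_ne ((hG g hg a b).mp hab.le) (g.injective.ne hab.ne)

variable {r : β → ℕ} (hr : ∀ x : β, IsGreatest {n | HasChainTo (· < ·) x n} (r x))
include hr

theorem rank_apply_eq {g : Equiv.Perm β} (hg : g ∈ G) (a : β) : r (g a) = r a := by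
  have rank_le : ∀ g ∈ G, ∀ a, r a ≤ r (g a) := fun g hg a =>
    (hr (g a)).2 ((hr a).1.map g fun _ _ => apply_lt_apply_of_lt hG hg)
  refine le_antisymm ?_ (rank_le g hg a)
  simpa using rank_le g⁻¹ (G.inv_mem hg) (g a)

omit hG in
theorem rank_lt_rank_of_lt {a b : β} (hab : a < b) : r a < r b :=
  (hr b).2 ((hr a).1.snoc hab)

theorem mk_ne_mk_of_lt {a b : β} (hab : a < b) :
    Quot.mk (orbRel G) a ≠ Quot.mk (orbRel G) b := by
  intro hmk
  obtain ⟨g, hg, rfl⟩ := orbRel_of_mk_eq_mk hmk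
  exact (rank_lt_rank_of_lt hr hab).ne' (rank_apply_eq hG hr hg a)

omit hr

theorem exists_lt_of_mk_lt {c : Quot (orbRel G)} {a : β}
    (h : qle (orbRel G) (· ≤ ·) c (Quot.mk (orbRel G) a) ∧ c ≠ Quot.mk (orbRel G) a) :
    ∃ b, Quot.mk (orbRel G) b = c ∧ b < a := by
  obtain ⟨⟨u, v, rfl, hv, huv⟩, hne⟩ := h
  obtain ⟨g, hg, rfl⟩ := orbRel_of_mk_eq_mk hv
  refine ⟨g u, mk_apply_eq_mk hg u, lt_of_le_of_ne ((hG g hg u v).mp huv) ?_⟩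
  intro hgu
  exact hne (by rw [← hgu, mk_apply_eq_mk hg])

theorem hasChainTo_of_mk {n : ℕ} {a : β}
    (h : HasChainTo (fun c d => qle (orbRel G) (· ≤ ·) c d ∧ c ≠ d) (Quot.mk (orbRel G) a) n) :
    HasChainTo (· < ·) a n := by
  induction n generalizing a with
  | zero => exact ⟨fun _ => a, rfl, Fin.elim0⟩
  | succ n ih =>
    obtain ⟨f, hlast, hstep⟩ := h
    obtain ⟨b, hb, hba⟩ := exists_lt_of_mk_lt hG (hlast ▸ Fin.succ_last n ▸ hstep (Fin.last n))
    refine (ih ⟨fun i => f i.castSucc, hb.symm, fun i => ?_⟩).snoc hba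
    simpa only [Fin.succ_castSucc] using hstep i.castSucc

end OrbitQuotient

theorem stmt_2_general {β : Type*} [PartialOrder β] (G : Subgroup (Equiv.Perm β))
    (hord : ∀ g ∈ G, ∀ x y : β, x ≤ y ↔ g x ≤ g y)
    (r : β → ℕ)
    (hr : ∀ x : β, IsGreatest {n | HasChainTo (· < ·) x n} (r x))
    (r' : Quot (orbRel G) → ℕ)
    (hr' : ∀ a, IsGreatest
      {n | HasChainTo (fun a b => qle (orbRel G) (· ≤ ·) a b ∧ a ≠ b) a n} (r' a))
    (x : β) :
    r' (Quot.mk (orbRel G) x) = r x := by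
  refine le_antisymm ((hr x).2 (hasChainTo_of_mk hord (hr' _).1)) ((hr' _).2 ?_)
  rw [Set.mem_ofPred_eq]
  exact (hr x).1.map (Quot.mk _) fun a b hab =>
    ⟨⟨a, b, rfl, rfl, hab.le⟩, mk_ne_mk_of_lt hord hr hab⟩

/-- For a finite ranked poset `P`, a subgroup `G` of `Aut(P)` with ranked
quotient `P/G`, the rank of the orbit `[x]` in `P/G` (longest chain ending at `[x]`)
equals the rank of `x` in `P`. -/
theorem stmt_2 {β : Type*} [Fintype β] [PartialOrder β] (G : Subgroup (Equiv.Perm β))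
    (hord : ∀ g ∈ G, ∀ x y : β, x ≤ y ↔ g x ≤ g y)
    (hranked : ∃ ρ : β → ℕ, IsRankFn (· ≤ ·) ρ)
    (hranked' : ∃ ρ' : Quot (orbRel G) → ℕ, IsRankFn (qle (orbRel G) (· ≤ ·)) ρ')
    (r : β → ℕ)
    (hr : ∀ x : β, IsGreatest {n | HasChainTo (· < ·) x n} (r x))
    (r' : Quot (orbRel G) → ℕ)
    (hr' : ∀ a, IsGreatest
      {n | HasChainTo (fun a b => qle (orbRel G) (· ≤ ·) a b ∧ a ≠ b) a n} (r' a))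
    (x : β) :
    r' (Quot.mk (orbRel G) x) = r x :=
  stmt_2_general G hord r hr r' hr' x
end

section
/- Let G = K ≀ T ≤ S_n with n = kt, fix an SCD C_1,...,C_s of B_k/K, and let J ⊆ [s]^t be a system of representatives of the T-orbits on [s]^t. Then the map Φ sending the G-orbit [Y]_G to the T_{j̄}-orbit [X̄]_{T_{j̄}}, where X ∈ [Y]_G is chosen so that X̄ lies in the grid C(j̄) for some j̄ ∈ J, is a well-defined bijection from B_n/G onto the disjoint union over j̄ ∈ J of C(j̄)/T_{j̄}. -/
open PaperSCD

/-- The tuple of column orbits `X̄ = ([X ∩ N_1]_{K_1}, …, [X ∩ N_t]_{K_t})`. -/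
def Xbar {k t : ℕ} (K : Subgroup (Equiv.Perm (Fin k))) (X : Finset (Fin k × Fin t)) :
    Fin t → Quot (relK K) :=
  fun r => Quot.mk (relK K) (col X r)

/-- The grid `C(j̄) = C_{j_1}^1 × ⋯ × C_{j_t}^t`, as a subtype. -/
def Grid {k t s : ℕ} (K : Subgroup (Equiv.Perm (Fin k)))
    (𝒞 : Fin s → Set (Quot (relK K))) (v : Fin t → Fin s) :=
  {f : Fin t → Quot (relK K) // ∀ r, f r ∈ 𝒞 (v r)}

/-- Orbit relation of the stabilizer `T_{j̄}` (acting via the maps `τ̂`) on the grid `C(j̄)`. -/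
def relGrid {k t s : ℕ} (K : Subgroup (Equiv.Perm (Fin k)))
    (𝒞 : Fin s → Set (Quot (relK K))) (T : Subgroup (Equiv.Perm (Fin t)))
    (v : Fin t → Fin s) : Grid K 𝒞 v → Grid K 𝒞 v → Prop :=
  fun f g => ∃ τ ∈ T, (∀ r, v (τ.symm r) = v r) ∧ ∀ r, f.1 (τ.symm r) = g.1 r

/-! Given an SCD of `B_k/K`, every tuple `f ∈ (B_k/K)^t` lies in exactly one grid `C(v)`; moving
`f` by `T` moves `v` the same way, so `f` can be carried into a grid `C(j̄)` with `j̄ ∈ J`, and two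
tuples in `C(j̄)` are `T`-related iff they are `T_{j̄}`-related. Since `X ↦ X̄` identifies
`B_n/(K ≀ T)` with the `T`-orbits on `(B_k/K)^t`, this gives the bijection. -/

theorem Quot.bijective_lift {α γ : Sort*} {r : α → α → Prop} {f : α → γ}
    (hr : ∀ a b, r a b ↔ f a = f b) (hf : Function.Surjective f) :
    Function.Bijective (Quot.lift f fun a b => (hr a b).1) := by
  refine ⟨fun a b => ?_, (Quot.surjective_lift _).2 hf⟩
  induction a using Quot.ind
  induction b using Quot.ind
  exact fun h => Quot.sound ((hr _ _).2 h)

namespace PaperSCD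

section Columns

variable {k t : ℕ}

theorem mem_col {X : Finset (Fin k × Fin t)} {i : Fin k} {r : Fin t} :
    i ∈ col X r ↔ (i, r) ∈ X := by
  simp [col]

theorem col_injective : Function.Injective (col : Finset (Fin k × Fin t) → _) := by
  intro X Y h
  ext ⟨i, r⟩
  rw [← mem_col, ← mem_col, h]

theorem col_surjective : Function.Surjective (col : Finset (Fin k × Fin t) → _) := by
  intro A
  refine ⟨Finset.univ.biUnion fun r => (A r).image fun i => (i, r), ?_⟩
  ext r i
  simp [mem_col]

theorem col_image_wrPerm (X : Finset (Fin k × Fin t)) (ρ : Fin t → Equiv.Perm (Fin k))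
    (τ : Equiv.Perm (Fin t)) (r : Fin t) :
    col (X.image (wrPerm ρ τ)) r = (col X (τ.symm r)).image (ρ (τ.symm r)) := by
  ext i
  simp only [mem_col, Finset.mem_image, Prod.exists]
  constructor
  · rintro ⟨a, r', hX, h⟩
    obtain ⟨rfl, rfl⟩ := Prod.ext_iff.1 h
    exact ⟨a, by simpa [wrPerm] using hX, by simp [wrPerm]⟩
  · rintro ⟨a, hX, hi⟩
    exact ⟨a, τ.symm r, hX, by simp [wrPerm, hi]⟩

end Columns

section CoordinateAction

variable {n : ℕ} {γ : Type*}

theorem actF_one (f : Fin n → γ) : actF 1 f = f := rfl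

theorem actF_mul (σ τ : Equiv.Perm (Fin n)) (f : Fin n → γ) :
    actF (σ * τ) f = actF σ (actF τ f) := rfl

theorem actF_inv_actF (τ : Equiv.Perm (Fin n)) (f : Fin n → γ) : actF τ⁻¹ (actF τ f) = f := by
  funext i
  simp [actF, Equiv.Perm.inv_def]

def ActRel (T : Subgroup (Equiv.Perm (Fin n))) (f g : Fin n → γ) : Prop :=
  ∃ τ ∈ T, actF τ f = g

theorem actRel_equivalence (T : Subgroup (Equiv.Perm (Fin n))) :
    Equivalence (ActRel (γ := γ) T) where
  refl f := ⟨1, T.one_mem, actF_one f⟩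
  symm := by
    rintro f _ ⟨τ, hτ, rfl⟩
    exact ⟨τ⁻¹, T.inv_mem hτ, actF_inv_actF τ f⟩
  trans := by
    rintro f _ _ ⟨τ, hτ, rfl⟩ ⟨σ, hσ, rfl⟩
    exact ⟨σ * τ, T.mul_mem hσ hτ, actF_mul σ τ f⟩

end CoordinateAction

section WreathOrbits

variable {k t : ℕ} {K : Subgroup (Equiv.Perm (Fin k))}

theorem relK_equivalence : Equivalence (relK K) where
  refl A := ⟨1, K.one_mem, by simp⟩
  symm := by
    rintro A _ ⟨g, hg, rfl⟩
    refine ⟨g⁻¹, K.inv_mem hg, ?_⟩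
    simp [Finset.image_image]
  trans := by
    rintro A _ _ ⟨g, hg, rfl⟩ ⟨h, hh, rfl⟩
    exact ⟨h * g, K.mul_mem hh hg, by rw [Finset.image_image]; rfl⟩

theorem quot_mk_relK_eq_iff {A B : Finset (Fin k)} :
    Quot.mk (relK K) A = Quot.mk (relK K) B ↔ relK K A B :=
  ⟨fun h => relK_equivalence.eqvGen_iff.1 (Quot.eq.1 h), Quot.sound⟩

theorem Xbar_surjective : Function.Surjective (Xbar (t := t) K) := by
  intro f
  obtain ⟨A, hA⟩ := Function.Surjective.comp_left Quot.mk_surjective f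
  obtain ⟨X, rfl⟩ := col_surjective A
  exact ⟨X, hA⟩

theorem relW_iff_actRel_Xbar {T : Subgroup (Equiv.Perm (Fin t))} {X Y : Finset (Fin k × Fin t)} :
    relW K T X Y ↔ ActRel T (Xbar K X) (Xbar K Y) := by
  constructor
  · rintro ⟨_, ⟨ρ, τ, hρ, hτ, rfl⟩, rfl⟩
    refine ⟨τ, hτ, funext fun r => ?_⟩
    exact Quot.sound ⟨ρ (τ.symm r), hρ _, (col_image_wrPerm X ρ τ r).symm⟩
  · rintro ⟨τ, hτ, h⟩
    have hcol : ∀ r, relK K (col X (τ.symm r)) (col Y r) := fun r =>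
      quot_mk_relK_eq_iff.1 (congrFun h r)
    choose g hgK hg using hcol
    refine ⟨wrPerm (fun r => g (τ r)) τ, ⟨_, τ, fun r => hgK (τ r), hτ, rfl⟩, ?_⟩
    refine col_injective (funext fun r => ?_)
    simpa [col_image_wrPerm] using hg r

end WreathOrbits

section GridOrbits

variable {k t s : ℕ} {K : Subgroup (Equiv.Perm (Fin k))} {T : Subgroup (Equiv.Perm (Fin t))}
  {𝒞 : Fin s → Set (Quot (relK K))} {J : Set (Fin t → Fin s)}

theorem relGrid_equivalence (v : Fin t → Fin s) : Equivalence (relGrid K 𝒞 T v) where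
  refl f := ⟨1, T.one_mem, fun _ => rfl, fun _ => rfl⟩
  symm := by
    rintro f g ⟨τ, hτ, hv, hf⟩
    refine ⟨τ⁻¹, T.inv_mem hτ, fun r => ?_, fun r => ?_⟩
    · simpa [Equiv.Perm.inv_def] using (hv (τ r)).symm
    · simpa [Equiv.Perm.inv_def] using (hf (τ r)).symm
  trans := by
    rintro f g h ⟨τ, hτ, hvτ, hfτ⟩ ⟨σ, hσ, hvσ, hgσ⟩
    exact ⟨σ * τ, T.mul_mem hσ hτ, fun r => (hvτ _).trans (hvσ r),
      fun r => (hfτ _).trans (hgσ r)⟩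

variable (K 𝒞 J) in
abbrev GridPoint := Σ w : {w : Fin t → Fin s // w ∈ J}, Grid K 𝒞 w.1

def GridPoint.cls (p : GridPoint K 𝒞 J) :
    Σ w : {w : Fin t → Fin s // w ∈ J}, Quot (relGrid K 𝒞 T w.1) :=
  ⟨p.1, Quot.mk _ p.2⟩

theorem eq_of_mem_grid (hpart : ∀ x, ∃! j : Fin s, x ∈ 𝒞 j) {f : Fin t → Quot (relK K)}
    {v w : Fin t → Fin s} (hv : ∀ r, f r ∈ 𝒞 (v r)) (hw : ∀ r, f r ∈ 𝒞 (w r)) : v = w :=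
  funext fun r => (hpart (f r)).unique (hv r) (hw r)

theorem GridPoint.cls_eq_cls_iff (hpart : ∀ x, ∃! j : Fin s, x ∈ 𝒞 j)
    (hJ : ∀ v : Fin t → Fin s, ∃! w, w ∈ J ∧ ActRel T v w) (p q : GridPoint K 𝒞 J) :
    p.cls (T := T) = q.cls ↔ ActRel T p.2.1 q.2.1 := by
  obtain ⟨⟨v, hv⟩, f, hf⟩ := p
  obtain ⟨⟨w, hw⟩, g, hg⟩ := q
  constructor
  · intro h
    simp only [GridPoint.cls, Sigma.mk.inj_iff, Subtype.mk.injEq] at h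
    obtain ⟨rfl, h⟩ := h
    obtain ⟨τ, hτ, -, hfg⟩ := (relGrid_equivalence v).eqvGen_iff.1 (Quot.eq.1 (eq_of_heq h))
    exact ⟨τ, hτ, funext hfg⟩
  · rintro ⟨τ, hτ, rfl⟩
    -- the partition forces the grid of `actF τ f` to be `actF τ v`; then `v, w ∈ J` lie in
    -- one `T`-orbit, so `v = w` and `τ` stabilizes it
    have hvw : actF τ v = w := eq_of_mem_grid hpart (fun r => hf (τ.symm r)) hg
    obtain rfl : v = w := (hJ v).unique ⟨hv, (actRel_equivalence T).refl v⟩ ⟨hw, τ, hτ, hvw⟩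
    exact congrArg (Sigma.mk _) (Quot.sound ⟨τ, hτ, congrFun hvw, fun _ => rfl⟩)

theorem exists_gridPoint_actRel (hpart : ∀ x, ∃! j : Fin s, x ∈ 𝒞 j)
    (hJ : ∀ v : Fin t → Fin s, ∃! w, w ∈ J ∧ ActRel T v w) (f : Fin t → Quot (relK K)) :
    ∃ p : GridPoint K 𝒞 J, ActRel T f p.2.1 := by
  choose v hv using fun r => (hpart (f r)).exists
  obtain ⟨_, ⟨hw, τ, hτ, rfl⟩, -⟩ := hJ v
  exact ⟨⟨⟨_, hw⟩, actF τ f, fun r => hv (τ.symm r)⟩, τ, hτ, rfl⟩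

noncomputable def gridClassOf (hpart : ∀ x, ∃! j : Fin s, x ∈ 𝒞 j)
    (hJ : ∀ v : Fin t → Fin s, ∃! w, w ∈ J ∧ ActRel T v w) (f : Fin t → Quot (relK K)) :
    Σ w : {w : Fin t → Fin s // w ∈ J}, Quot (relGrid K 𝒞 T w.1) :=
  (exists_gridPoint_actRel hpart hJ f).choose.cls

variable (hpart : ∀ x, ∃! j : Fin s, x ∈ 𝒞 j) (hJ : ∀ v : Fin t → Fin s, ∃! w, w ∈ J ∧ ActRel T v w)

theorem gridClassOf_eq_cls {f : Fin t → Quot (relK K)} {p : GridPoint K 𝒞 J}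
    (hp : ActRel T f p.2.1) : gridClassOf hpart hJ f = p.cls := by
  obtain hf := (exists_gridPoint_actRel hpart hJ f).choose_spec
  exact (GridPoint.cls_eq_cls_iff hpart hJ _ _).2
    ((actRel_equivalence T).trans ((actRel_equivalence T).symm hf) hp)

theorem gridClassOf_eq_iff {f g : Fin t → Quot (relK K)} :
    gridClassOf hpart hJ f = gridClassOf hpart hJ g ↔ ActRel T f g := by
  obtain hf := (exists_gridPoint_actRel hpart hJ f).choose_spec
  obtain hg := (exists_gridPoint_actRel hpart hJ g).choose_spec
  have e := actRel_equivalence (γ := Quot (relK K)) T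
  rw [gridClassOf, gridClassOf, GridPoint.cls_eq_cls_iff hpart hJ]
  exact ⟨fun h => e.trans (e.trans hf h) (e.symm hg), fun h => e.trans (e.trans (e.symm hf) h) hg⟩

theorem gridClassOf_surjective : Function.Surjective (gridClassOf hpart hJ) := by
  rintro ⟨w, q⟩
  induction q using Quot.ind with | _ f =>
  exact ⟨f.1, gridClassOf_eq_cls hpart hJ (p := ⟨w, f⟩) ((actRel_equivalence T).refl _)⟩

end GridOrbits

end PaperSCD

theorem stmt_6_general {k t s : ℕ} (K : Subgroup (Equiv.Perm (Fin k)))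
    (T : Subgroup (Equiv.Perm (Fin t)))
    (𝒞 : Fin s → Set (Quot (relK K)))
    (hpart : ∀ x, ∃! j : Fin s, x ∈ 𝒞 j)
    (J : Set (Fin t → Fin s))
    (hJ : ∀ v : Fin t → Fin s, ∃! w, w ∈ J ∧ ∃ τ ∈ T, (fun r => v (τ.symm r)) = w) :
    ∃ Φ : Quot (relW K T) → Σ w : {w : Fin t → Fin s // w ∈ J}, Quot (relGrid K 𝒞 T w.1),
      Function.Bijective Φ ∧
      ∀ (X : Finset (Fin k × Fin t)) (w : Fin t → Fin s) (hw : w ∈ J)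
        (hX : ∀ r, Xbar K X r ∈ 𝒞 (w r)),
        Φ (Quot.mk (relW K T) X) = ⟨⟨w, hw⟩, Quot.mk (relGrid K 𝒞 T w) ⟨Xbar K X, hX⟩⟩ := by
  have hΦ : ∀ X Y,
      relW K T X Y ↔ gridClassOf hpart hJ (Xbar K X) = gridClassOf hpart hJ (Xbar K Y) := fun X Y =>
    relW_iff_actRel_Xbar.trans (gridClassOf_eq_iff hpart hJ).symm
  refine ⟨_, Quot.bijective_lift hΦ ((gridClassOf_surjective hpart hJ).comp Xbar_surjective), ?_⟩
  intro X w hw hX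
  exact gridClassOf_eq_cls hpart hJ (p := ⟨⟨w, hw⟩, Xbar K X, hX⟩) ((actRel_equivalence T).refl _)

/-- With an SCD `C_1, …, C_s` of `B_k/K` and a system `J` of representatives
of the `T`-orbits on `[s]^t`, the map `Φ` sending `[Y]_G` (for `G = K ≀ T`) to `[X̄]_{T_{j̄}}`,
where `X ∈ [Y]_G` has `X̄ ∈ C(j̄)` with `j̄ ∈ J`, is a well-defined bijection from `B_n/G` onto
the disjoint union over `j̄ ∈ J` of `C(j̄)/T_{j̄}`. -/
theorem stmt_6 {k t s : ℕ} (K : Subgroup (Equiv.Perm (Fin k)))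
    (T : Subgroup (Equiv.Perm (Fin t)))
    (𝒞 : Fin s → Set (Quot (relK K)))
    (hchain : ∀ j, IsSymmSatChain (qle (relK K) (· ⊆ ·)) (qrank K) k (𝒞 j))
    (hpart : ∀ x, ∃! j : Fin s, x ∈ 𝒞 j)
    (J : Set (Fin t → Fin s))
    (hJ : ∀ v : Fin t → Fin s, ∃! w, w ∈ J ∧ ∃ τ ∈ T, (fun r => v (τ.symm r)) = w) :
    ∃ Φ : Quot (relW K T) → Σ w : {w : Fin t → Fin s // w ∈ J}, Quot (relGrid K 𝒞 T w.1),
      Function.Bijective Φ ∧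
      ∀ (X : Finset (Fin k × Fin t)) (w : Fin t → Fin s) (hw : w ∈ J)
        (hX : ∀ r, Xbar K X r ∈ 𝒞 (w r)),
        Φ (Quot.mk (relW K T) X) = ⟨⟨w, hw⟩, Quot.mk (relGrid K 𝒞 T w) ⟨Xbar K X, hX⟩⟩ :=
  stmt_6_general K T 𝒞 hpart J hJ
end

section
/- Let P be a finite poset with SCD C_1,...,C_s, let G ≤ S_n act on P^n by permuting coordinates, and let J ⊆ [s]^n be a system of representatives of the G-orbits on [s]^n. Then the map Ψ sending a G-orbit [ȳ]_G in P^n/G to the G_{j̄}-orbit [x̄]_{G_{j̄}}, where x̄ ∈ [ȳ]_G lies in C(j̄) for the unique j̄ ∈ J, is a well-defined bijection from P^n/G onto the disjoint union over j̄ ∈ J of C(j̄)/G_{j̄}. -/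
open PaperSCD

/-- The grid `C(j̄) = C_{j_1} × ⋯ × C_{j_n}` in `P^n`, as a subtype. -/
def GridP {α : Type*} {n s : ℕ} (𝒞 : Fin s → Set α) (v : Fin n → Fin s) :=
  {f : Fin n → α // ∀ i, f i ∈ 𝒞 (v i)}

/-- Orbit relation of the stabilizer `G_{j̄}` acting on the grid `C(j̄)` by restriction. -/
def relGridP {α : Type*} {n s : ℕ} (G : Subgroup (Equiv.Perm (Fin n)))
    (𝒞 : Fin s → Set α) (v : Fin n → Fin s) : GridP 𝒞 v → GridP 𝒞 v → Prop :=
  fun f g => ∃ σ ∈ G, (∀ i, v (σ.symm i) = v i) ∧ ∀ i, f.1 (σ.symm i) = g.1 i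

/-- Orbit relation of `G ≤ S_n` acting on `P^n` by permuting coordinates. -/
def relPow {α : Type*} {n : ℕ} (G : Subgroup (Equiv.Perm (Fin n))) :
    (Fin n → α) → (Fin n → α) → Prop :=
  fun f g => ∃ σ ∈ G, actF σ f = g

/-!
Ψ is the inverse of the map sending the `G_{j̄}`-orbit of `x̄ ∈ C(j̄)` to its `G`-orbit in `P^n`.
Since the chains partition `P`, each `ȳ ∈ P^n` lies in exactly one grid `C(v̄)`, and `σ ∈ G`
carries it into `C(σ v̄)`. Choosing `σ` with `σ v̄ ∈ J` shows that every `G`-orbit meets some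
`C(j̄)`, `j̄ ∈ J`; if `x̄ ∈ C(j̄)` and `σ x̄ ∈ C(j̄')` with `j̄, j̄' ∈ J`, then `σ j̄ = j̄'`, so
`j̄ = j̄'` and `σ ∈ G_{j̄}`.
-/

section GridOrbits

variable {α : Type*} {n s : ℕ}

theorem relPow_equivalence (G : Subgroup (Equiv.Perm (Fin n))) :
    Equivalence (relPow (α := α) G) where
  refl _ := ⟨1, G.one_mem, rfl⟩
  symm := by
    rintro f _ ⟨σ, hσ, rfl⟩
    exact ⟨σ⁻¹, G.inv_mem hσ, funext fun i => by simp [actF, Equiv.Perm.inv_def]⟩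
  trans := by
    rintro f _ _ ⟨σ, hσ, rfl⟩ ⟨τ, hτ, rfl⟩
    exact ⟨τ * σ, G.mul_mem hτ hσ, funext fun i => by simp [actF, Equiv.Perm.mul_def]⟩

theorem quot_mk_relPow_eq_iff (G : Subgroup (Equiv.Perm (Fin n))) {f g : Fin n → α} :
    Quot.mk (relPow G) f = Quot.mk (relPow G) g ↔ relPow G f g :=
  Quot.eq.trans (relPow_equivalence G).eqvGen_iff

def gridOrbitToOrbit (G : Subgroup (Equiv.Perm (Fin n))) (𝒞 : Fin s → Set α)
    (J : Set (Fin n → Fin s)) :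
    (Σ w : {w : Fin n → Fin s // w ∈ J}, Quot (relGridP G 𝒞 w.1)) → Quot (relPow (α := α) G) :=
  fun p => Quot.lift (fun f : GridP 𝒞 p.1.1 => Quot.mk (relPow G) f.1)
    (by rintro f g ⟨σ, hσ, -, hfg⟩; exact Quot.sound ⟨σ, hσ, funext hfg⟩) p.2

theorem actF_eq_of_mem_grid (𝒞 : Fin s → Set α) (hpart : ∀ x : α, ∃! j : Fin s, x ∈ 𝒞 j)
    {f : Fin n → α} {v w : Fin n → Fin s} (σ : Equiv.Perm (Fin n))
    (hf : ∀ i, f i ∈ 𝒞 (v i)) (hσf : ∀ i, actF σ f i ∈ 𝒞 (w i)) :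
    actF σ v = w :=
  funext fun i => (hpart _).unique (hf (σ.symm i)) (hσf i)

theorem gridOrbitToOrbit_injective (G : Subgroup (Equiv.Perm (Fin n))) (𝒞 : Fin s → Set α)
    (hpart : ∀ x : α, ∃! j : Fin s, x ∈ 𝒞 j) (J : Set (Fin n → Fin s))
    (hJ : ∀ v : Fin n → Fin s, ∃! w, w ∈ J ∧ ∃ σ ∈ G, actF σ v = w) :
    Function.Injective (gridOrbitToOrbit G 𝒞 J) := by
  rintro ⟨⟨w₁, hw₁⟩, q₁⟩ ⟨⟨w₂, hw₂⟩, q₂⟩ h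
  induction q₁ using Quot.ind with | _ f =>
  induction q₂ using Quot.ind with | _ g =>
  obtain ⟨σ, hσ, hfg⟩ := (quot_mk_relPow_eq_iff G).mp h
  have hσw : actF σ w₁ = w₂ := actF_eq_of_mem_grid 𝒞 hpart σ f.2 (hfg ▸ g.2)
  obtain rfl : w₂ = w₁ :=
    (hJ w₁).unique ⟨hw₂, σ, hσ, hσw⟩ ⟨hw₁, 1, G.one_mem, rfl⟩
  exact Sigma.ext rfl <| heq_of_eq <|
    Quot.sound ⟨σ, hσ, congrFun hσw, congrFun hfg⟩

theorem gridOrbitToOrbit_surjective (G : Subgroup (Equiv.Perm (Fin n))) (𝒞 : Fin s → Set α)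
    (hpart : ∀ x : α, ∃! j : Fin s, x ∈ 𝒞 j) (J : Set (Fin n → Fin s))
    (hJ : ∀ v : Fin n → Fin s, ∃! w, w ∈ J ∧ ∃ σ ∈ G, actF σ v = w) :
    Function.Surjective (gridOrbitToOrbit G 𝒞 J) := by
  rintro ⟨f⟩
  choose v hv using fun i => (hpart (f i)).exists
  obtain ⟨w, ⟨hwJ, σ, hσ, rfl⟩, -⟩ := hJ v
  refine ⟨⟨⟨_, hwJ⟩, Quot.mk _ ⟨actF σ f, fun i => hv (σ.symm i)⟩⟩, ?_⟩
  exact ((quot_mk_relPow_eq_iff G).mpr ⟨σ, hσ, rfl⟩).symm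

end GridOrbits

theorem stmt_12_general {α : Type*}
    {s : ℕ} (𝒞 : Fin s → Set α)
    (hpart : ∀ x : α, ∃! j : Fin s, x ∈ 𝒞 j)
    {n : ℕ} (G : Subgroup (Equiv.Perm (Fin n)))
    (J : Set (Fin n → Fin s))
    (hJ : ∀ v : Fin n → Fin s, ∃! w, w ∈ J ∧ ∃ σ ∈ G, actF σ v = w) :
    ∃ Ψ : Quot (relPow (α := α) G) →
        Σ w : {w : Fin n → Fin s // w ∈ J}, Quot (relGridP G 𝒞 w.1),
      Function.Bijective Ψ ∧
      ∀ (f : Fin n → α) (w : Fin n → Fin s) (hw : w ∈ J) (hf : ∀ i, f i ∈ 𝒞 (w i)),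
        Ψ (Quot.mk (relPow G) f) = ⟨⟨w, hw⟩, Quot.mk (relGridP G 𝒞 w) ⟨f, hf⟩⟩ := by
  let Φ := Equiv.ofBijective (gridOrbitToOrbit G 𝒞 J)
    ⟨gridOrbitToOrbit_injective G 𝒞 hpart J hJ, gridOrbitToOrbit_surjective G 𝒞 hpart J hJ⟩
  refine ⟨Φ.symm, Φ.symm.bijective, fun f w hw hf => ?_⟩
  rw [Equiv.symm_apply_eq]
  rfl

/-- With an SCD `C_1, …, C_s` of `P`, `G ≤ S_n` permuting coordinates of
`P^n`, and a system `J` of representatives of the `G`-orbits on `[s]^n`, the map `Ψ`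
sending `[ȳ]_G` to `[x̄]_{G_{j̄}}` where `x̄ ∈ [ȳ]_G` lies in `C(j̄)` for the unique `j̄ ∈ J`
is a well-defined bijection from `P^n/G` onto the disjoint union of the `C(j̄)/G_{j̄}`. -/
theorem stmt_12 {α : Type*} [Fintype α] [PartialOrder α]
    (r : α → ℕ) (R : ℕ) (hr : IsRankFn (· ≤ · : α → α → Prop) r)
    {s : ℕ} (𝒞 : Fin s → Set α)
    (hchain : ∀ j, IsSymmSatChain (· ≤ ·) r R (𝒞 j))
    (hpart : ∀ x : α, ∃! j : Fin s, x ∈ 𝒞 j)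
    {n : ℕ} (G : Subgroup (Equiv.Perm (Fin n)))
    (J : Set (Fin n → Fin s))
    (hJ : ∀ v : Fin n → Fin s, ∃! w, w ∈ J ∧ ∃ σ ∈ G, actF σ v = w) :
    ∃ Ψ : Quot (relPow (α := α) G) →
        Σ w : {w : Fin n → Fin s // w ∈ J}, Quot (relGridP G 𝒞 w.1),
      Function.Bijective Ψ ∧
      ∀ (f : Fin n → α) (w : Fin n → Fin s) (hw : w ∈ J) (hf : ∀ i, f i ∈ 𝒞 (w i)),
        Ψ (Quot.mk (relPow G) f) = ⟨⟨w, hw⟩, Quot.mk (relGridP G 𝒞 w) ⟨f, hf⟩⟩ :=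
  stmt_12_general 𝒞 hpart G J hJ
end

section
/- For n ≥ 5, the dihedral group D_{2n} of symmetries of a regular n-gon, viewed as a subgroup of S_n, is not equal to any wreath product K ≀ T with K ≤ S_k, T ≤ S_t, kt = n and k, t > 1. (Proof idea: every element of D_{2n} fixes 0, 1, 2, or n points, whereas a wreath product K ≀ T with nontrivial factors contains elements whose fixed-point counts are multiples of k strictly between 0 and n.) -/
open PaperSCD

/-- Transport of a set of permutations of `[k] × [t]` along an identification
`e : [k] × [t] ≃ [n]`. -/
def conjSet {n k t : ℕ} (e : Fin k × Fin t ≃ Fin n)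
    (S : Set (Equiv.Perm (Fin k × Fin t))) : Set (Equiv.Perm (Fin n)) :=
  (fun φ => (e.symm.trans φ).trans e) '' S

/-! Every element of `D_{2n}` is a rotation `i ↦ i + c`, which fixes no point unless it is the
identity, or a reflection `i ↦ c - i`, whose fixed points solve `2x = c` in `ℤ/n` and so number
at most two. If `K` is trivial, every element of `K ≀ T` preserves the first coordinate, which the
transitive rotation cannot do. Otherwise a nontrivial `σ ∈ K` acting on a single column gives a
nonidentity element of `K ≀ T` fixing the `k (t - 1) ≥ 3` points of the remaining columns. -/

open scoped Fin.NatCast Fin.CommRing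
open Finset

section Dihedral

variable {m : ℕ}

lemma Fin.revPerm_apply_eq_neg_one_sub (i : Fin (m + 1)) : Fin.revPerm i = -1 - i := by
  have hlast : Fin.last m = -1 := Fin.ext (by simp [Fin.coe_neg_one])
  rw [Fin.revPerm_apply, ← Fin.last_sub, hlast]

lemma exists_eq_add_or_eq_sub_of_mem_dihedral {g : Equiv.Perm (Fin (m + 1))}
    (hg : g ∈ Subgroup.closure {finRotate (m + 1), Fin.revPerm}) :
    ∃ c : Fin (m + 1), (∀ i, g i = i + c) ∨ ∀ i, g i = c - i := by
  induction hg using Subgroup.closure_induction with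
  | mem g hg =>
    rcases hg with rfl | rfl
    · exact ⟨1, .inl finRotate_apply⟩
    · exact ⟨-1, .inr Fin.revPerm_apply_eq_neg_one_sub⟩
  | one => exact ⟨0, .inl fun i => (add_zero i).symm⟩
  | mul g h _ _ ihg ihh =>
    obtain ⟨c, hc | hc⟩ := ihg <;> obtain ⟨d, hd | hd⟩ := ihh
    · exact ⟨d + c, .inl fun i => by simp only [Equiv.Perm.mul_apply, hc, hd]; ring⟩
    · exact ⟨d + c, .inr fun i => by simp only [Equiv.Perm.mul_apply, hc, hd]; ring⟩
    · exact ⟨c - d, .inr fun i => by simp only [Equiv.Perm.mul_apply, hc, hd]; ring⟩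
    · exact ⟨c - d, .inl fun i => by simp only [Equiv.Perm.mul_apply, hc, hd]; ring⟩
  | inv g _ ih =>
    obtain ⟨c, hc | hc⟩ := ih
    · refine ⟨-c, .inl fun i => ?_⟩
      have := hc (g.symm i)
      rw [Equiv.apply_symm_apply] at this
      rw [Equiv.Perm.coe_inv]
      linear_combination -this
    · refine ⟨c, .inr fun i => ?_⟩
      have := hc (g.symm i)
      rw [Equiv.apply_symm_apply] at this
      rw [Equiv.Perm.coe_inv]
      linear_combination this

lemma Fin.eq_of_add_self_eq_zero {u v : Fin (m + 1)} (hu : u ≠ 0) (hv : v ≠ 0)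
    (hu2 : u + u = 0) (hv2 : v + v = 0) : u = v := by
  have key : ∀ w : Fin (m + 1), w ≠ 0 → w + w = 0 → 2 * w.val = m + 1 := by
    intro w hw hw2
    have hdvd : m + 1 ∣ 2 * w.val := by
      rw [Nat.dvd_iff_mod_eq_zero, two_mul, ← Fin.val_add, hw2, Fin.val_zero]
    have hpos : 0 < w.val := Nat.pos_of_ne_zero (Fin.val_ne_iff.mpr hw)
    obtain ⟨q, hq⟩ := hdvd
    rcases q with _ | _ | q
    · omega
    · omega
    · nlinarith [w.isLt]
  exact Fin.ext (by have := key u hu hu2; have := key v hv hv2; omega)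

lemma card_fixed_le_two_of_mem_dihedral {g : Equiv.Perm (Fin (m + 1))}
    (hg : g ∈ Subgroup.closure {finRotate (m + 1), Fin.revPerm}) (hg1 : g ≠ 1) :
    #{x | g x = x} ≤ 2 := by
  by_contra! hcard
  obtain ⟨x, hx, y, hy, z, hz, hxy, hxz, hyz⟩ := two_lt_card.mp hcard
  simp only [mem_filter, mem_univ, true_and] at hx hy hz
  obtain ⟨c, hc | hc⟩ := exists_eq_add_or_eq_sub_of_mem_dihedral hg
  · have hc0 : c = 0 := by rw [hc] at hx; exact add_eq_left.mp hx
    exact hg1 (Equiv.ext fun i => by rw [hc, hc0, add_zero, Equiv.Perm.one_apply])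
  · rw [hc] at hx hy hz
    have hyx : y - x = z - x :=
      Fin.eq_of_add_self_eq_zero (sub_ne_zero.mpr hxy.symm) (sub_ne_zero.mpr hxz.symm)
        (by linear_combination hx - hy) (by linear_combination hx - hz)
    exact hyz (sub_left_inj.mp hyx)

lemma apply_eq_of_apply_finRotate_eq {α : Type*} {f : Fin (m + 1) → α}
    (hf : ∀ i, f (finRotate (m + 1) i) = f i) (i j : Fin (m + 1)) : f i = f j := by
  have hpow : ∀ a : ℕ,
      f ((finRotate (m + 1) ^ a) i) = f i ∧ (finRotate (m + 1) ^ a) i = i + a := by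
    intro a
    induction a with
    | zero => simp
    | succ a ih =>
      rw [pow_succ', Equiv.Perm.mul_apply, hf, ih.1, finRotate_apply, ih.2]
      exact ⟨rfl, by push_cast; ring⟩
  obtain ⟨hfi, hi⟩ := hpow (j - i).val
  rw [hi, Fin.cast_val_eq_self, add_sub_cancel] at hfi
  exact hfi.symm

end Dihedral

section Wreath

variable {k t n : ℕ} {K : Subgroup (Equiv.Perm (Fin k))} {T : Subgroup (Equiv.Perm (Fin t))}

@[simp]
lemma wrPerm_apply (ρ : Fin t → Equiv.Perm (Fin k)) (τ : Equiv.Perm (Fin t)) (p : Fin k × Fin t) :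
    wrPerm ρ τ p = (ρ p.2 p.1, τ p.2) := rfl

lemma fst_symm_apply_of_mem_conjSet_wreathSet (hK : ∀ σ ∈ K, σ = 1) (e : Fin k × Fin t ≃ Fin n)
    {g : Equiv.Perm (Fin n)} (hg : g ∈ conjSet e (wreathSet K T)) (x : Fin n) :
    (e.symm (g x)).1 = (e.symm x).1 := by
  obtain ⟨_, ⟨ρ, τ, hρ, -, rfl⟩, rfl⟩ := hg
  simp [hK _ (hρ _)]

lemma exists_mem_conjSet_wreathSet_le_card_fixed {σ : Equiv.Perm (Fin k)} (hσK : σ ∈ K)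
    (hσ1 : σ ≠ 1) (r₀ : Fin t) (e : Fin k × Fin t ≃ Fin n) :
    ∃ g ∈ conjSet e (wreathSet K T), g ≠ 1 ∧ k * (t - 1) ≤ #{x | g x = x} := by
  obtain ⟨i₀, hi₀⟩ : ∃ i, σ i ≠ i := by
    by_contra! h
    exact hσ1 (Equiv.ext h)
  set g := (e.symm.trans (wrPerm (Pi.mulSingle r₀ σ) 1)).trans e
  have hg_apply : ∀ p : Fin k × Fin t,
      g (e p) = e ((Pi.mulSingle r₀ σ : Fin t → Equiv.Perm (Fin k)) p.2 p.1, p.2) := by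
    intro p
    simp [g]
  refine ⟨g, ⟨_, ⟨Pi.mulSingle r₀ σ, 1, fun r => ?_, T.one_mem, rfl⟩, rfl⟩, fun hg1 => ?_, ?_⟩
  · rcases eq_or_ne r r₀ with rfl | hr
    · rw [Pi.mulSingle_eq_same]; exact hσK
    · rw [Pi.mulSingle_eq_of_ne hr]; exact K.one_mem
  · have := hg_apply (i₀, r₀)
    rw [hg1, Equiv.Perm.one_apply, Pi.mulSingle_eq_same] at this
    exact hi₀ (congrArg Prod.fst (e.injective this)).symm
  · calc k * (t - 1) = #((univ ×ˢ univ.erase r₀).map e.toEmbedding) := by simp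
      _ ≤ #{x | g x = x} := card_le_card fun x hx => by
        obtain ⟨p, hp, rfl⟩ := mem_map.mp hx
        have hp2 : p.2 ≠ r₀ := (mem_erase.mp (mem_product.mp hp).2).1
        simp [hg_apply, Pi.mulSingle_eq_of_ne hp2]

end Wreath

/-- For `n ≥ 5`, the dihedral group `D_{2n} ≤ S_n` (generated by the
`n`-cycle and the reflection) is not equal to any wreath product `K ≀ T` with `K ≤ S_k`,
`T ≤ S_t`, `kt = n` and `k, t > 1`, under any identification of `[k] × [t]` with `[n]`. -/
theorem stmt_17 (n : ℕ) (hn : 5 ≤ n) :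
    ¬ ∃ (k t : ℕ) (_ : 1 < k) (_ : 1 < t) (_ : k * t = n)
        (e : Fin k × Fin t ≃ Fin n)
        (K : Subgroup (Equiv.Perm (Fin k))) (T : Subgroup (Equiv.Perm (Fin t))),
      ((Subgroup.closure {finRotate n, (Fin.revPerm : Equiv.Perm (Fin n))} :
          Subgroup (Equiv.Perm (Fin n))) : Set (Equiv.Perm (Fin n)))
        = conjSet e (wreathSet K T) := by
  obtain ⟨m, rfl⟩ : ∃ m, n = m + 1 := ⟨n - 1, by omega⟩
  rintro ⟨k, t, hk, ht, hkt, e, K, T, hD⟩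
  by_cases hK : ∀ σ ∈ K, σ = 1
  · have hrot : finRotate (m + 1) ∈ conjSet e (wreathSet K T) :=
      hD ▸ Subgroup.subset_closure (Set.mem_insert _ _)
    have hconst := apply_eq_of_apply_finRotate_eq (f := fun x => (e.symm x).1)
      (fst_symm_apply_of_mem_conjSet_wreathSet hK e hrot)
      (e (⟨0, by omega⟩, ⟨0, by omega⟩)) (e (⟨1, hk⟩, ⟨0, by omega⟩))
    simp at hconst
  · push Not at hK
    obtain ⟨σ, hσK, hσ1⟩ := hK
    obtain ⟨g, hgW, hg1, hfix⟩ :=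
      exists_mem_conjSet_wreathSet_le_card_fixed (T := T) hσK hσ1 ⟨0, by omega⟩ e
    have hgD : g ∈ Subgroup.closure {finRotate (m + 1), Fin.revPerm} := by
      rw [← SetLike.mem_coe, hD]; exact hgW
    have hcard := card_fixed_le_two_of_mem_dihedral hgD hg1
    obtain ⟨s, rfl⟩ : ∃ s, t = s + 1 := ⟨t - 1, by omega⟩
    simp only [add_tsub_cancel_right] at hfix
    nlinarith
end

section
/- Every automorphism of a finite product of chains ∏_{i=1}^m C_i^{n_i}, where the chains C_i are pairwise non-isomorphic, decomposes as a product of automorphisms φ_i of C_i^{n_i}, and each φ_i permutes coordinates: there is σ_i ∈ S_{n_i} with φ_i(x_1,...,x_{n_i}) = (x_{σ_i^{-1}(1)},...,x_{σ_i^{-1}(n_i)}). -/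
open PaperSCD

/-!
In a product of chains with least elements, the elements whose lower set is a chain are exactly
those with at most one coordinate different from `⊥`, i.e. the points of the axes
`{single i a}`. An order isomorphism preserves this property and comparability, so it maps each
nontrivial axis onto an axis, inducing an isomorphism `G` of the corresponding chains; since
`c ≤ f k` iff `single k c ≤ f`, this forces `φ f k = G (f i)` for all `f`. For the theorem,
non-isomorphic chains keep every axis inside its own block `C_i^{n_i}`, and the only
automorphism of a finite chain is the identity.
-/

namespace ChainProduct

open Function

variable {ι κ : Type*} {δ : ι → Type*} {ε : κ → Type*}

def single [DecidableEq ι] [∀ i, Bot (δ i)] (i : ι) (a : δ i) : ∀ j, δ j :=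
  update ⊥ i a

section Bot

variable [DecidableEq ι] [∀ i, Bot (δ i)] {i j : ι}

@[simp] lemma single_apply_self (i : ι) (a : δ i) : single i a i = a := update_self ..

@[simp] lemma single_apply_of_ne (h : j ≠ i) (a : δ i) : single i a j = ⊥ := update_of_ne h ..

@[simp] lemma single_bot (i : ι) : single (δ := δ) i ⊥ = ⊥ := update_eq_self ..

lemma single_ne_bot {a : δ i} (ha : a ≠ ⊥) : single (δ := δ) i a ≠ ⊥ :=
  fun h => ha (by simpa using congrFun h i)

end Bot

section Preorder

variable [DecidableEq ι] [∀ i, Preorder (δ i)] [∀ i, OrderBot (δ i)] {i : ι}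

lemma single_le_iff {a : δ i} {x : ∀ j, δ j} : single i a ≤ x ↔ a ≤ x i := by
  refine ⟨fun h => by simpa using h i, fun h j => ?_⟩
  rcases eq_or_ne j i with rfl | hj
  · simpa using h
  · simp [hj]

lemma single_mono (i : ι) : Monotone (single (δ := δ) i) := fun _ _ hab =>
  single_le_iff.2 (by simpa using hab)

end Preorder

section PartialOrder

variable [DecidableEq ι] [∀ i, PartialOrder (δ i)] [∀ i, OrderBot (δ i)]

lemma eq_single_of_le {i : ι} {a : δ i} {x : ∀ j, δ j} (h : x ≤ single i a) :
    x = single i (x i) := by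
  funext j
  rcases eq_or_ne j i with rfl | hj
  · simp
  · simpa [hj] using h j

lemma apply_eq_bot_of_isChain_Iic {x : ∀ j, δ j} (hx : IsChain (· ≤ ·) (Set.Iic x)) {i j : ι}
    (hi : x i ≠ ⊥) (hj : j ≠ i) : x j = ⊥ := by
  have hle : ∀ k, single k (x k) ≤ x := fun k => single_le_iff.2 le_rfl
  rcases hx.total (hle i) (hle j) with h | h
  · exact absurd (by simpa [Ne.symm hj] using h i) hi
  · simpa [hj] using h j

end PartialOrder

lemma isChain_Iic_single [DecidableEq ι] [∀ i, LinearOrder (δ i)] [∀ i, OrderBot (δ i)] (i : ι)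
    (a : δ i) : IsChain (· ≤ ·) (Set.Iic (single i a)) := by
  intro x hx y hy _
  rw [eq_single_of_le hx, eq_single_of_le hy]
  exact (le_total (x i) (y i)).imp (single_mono i ·) (single_mono i ·)

section OrderIso

variable [DecidableEq ι] [∀ i, LinearOrder (δ i)] [∀ i, OrderBot (δ i)]
  [∀ k, LinearOrder (ε k)] [∀ k, OrderBot (ε k)] (φ : (∀ i, δ i) ≃o ∀ k, ε k)

/-- The images of `single i a` and `single i a₀` both lie below the image of `single i (a ⊔ a₀)`,
whose lower set is a chain, so they lie on the same axis. -/
lemma map_single_eq [DecidableEq κ] {i : ι} {k : κ} {a₀ : δ i} (h : φ (single i a₀) k ≠ ⊥)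
    (a : δ i) : φ (single i a) = single k (φ (single i a) k) := by
  set z := φ (single i (a ⊔ a₀))
  have hz : IsChain (· ≤ ·) (Set.Iic z) := by
    rw [← φ.image_Iic]
    exact (isChain_Iic_single i _).image φ
  have hzk : z k ≠ ⊥ := ne_bot_of_le_ne_bot h (φ.monotone (single_mono i le_sup_right) k)
  have hle : φ (single i a) ≤ z := φ.monotone (single_mono i le_sup_left)
  funext j
  rcases eq_or_ne j k with rfl | hj
  · simp
  · rw [single_apply_of_ne hj]
    exact le_bot_iff.1 ((hle j).trans (apply_eq_bot_of_isChain_Iic hz hzk hj).le)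

lemma exists_orderIso_apply_eq [DecidableEq κ] {i : ι} {k : κ} {a₀ : δ i}
    (h : φ (single i a₀) k ≠ ⊥) : ∃ G : δ i ≃o ε k, ∀ f, φ f k = G (f i) := by
  have h' : φ.symm (single k (φ (single i a₀) k)) i ≠ ⊥ := by
    rw [← map_single_eq φ h, φ.symm_apply_apply, single_apply_self]
    rintro rfl
    simp at h
  let G : δ i ≃o ε k := Equiv.toOrderIso
    { toFun a := φ (single i a) k
      invFun c := φ.symm (single k c) i
      left_inv a := by
        dsimp only
        rw [← map_single_eq φ h, φ.symm_apply_apply, single_apply_self]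
      right_inv c := by
        dsimp only
        rw [← map_single_eq φ.symm h', φ.apply_symm_apply, single_apply_self] }
    (fun _ _ hab => φ.monotone (single_mono i hab) k)
    (fun _ _ hcd => φ.symm.monotone (single_mono k hcd) i)
  refine ⟨G, fun f => eq_of_forall_le_iff fun c => ?_⟩
  calc c ≤ φ f k ↔ single k c ≤ φ f := single_le_iff.symm
    _ ↔ φ.symm (single k c) ≤ f := φ.symm_apply_le.symm
    _ ↔ single i (G.symm c) ≤ f := by rw [map_single_eq φ.symm h' c]; rfl
    _ ↔ G.symm c ≤ f i := single_le_iff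
    _ ↔ c ≤ G (f i) := G.symm_apply_le

lemma exists_orderIso_apply_eq_of_nontrivial [DecidableEq κ] (i : ι) [Nontrivial (δ i)] :
    ∃ k, ∃ G : δ i ≃o ε k, ∀ f, φ f k = G (f i) := by
  obtain ⟨a, ha⟩ := exists_ne (⊥ : δ i)
  have hφ : φ (single i a) ≠ ⊥ := by rw [ne_eq, map_eq_bot_iff]; exact single_ne_bot ha
  obtain ⟨k, hk⟩ : ∃ k, φ (single i a) k ≠ ⊥ := by
    by_contra! h
    exact hφ (funext h)
  exact ⟨k, exists_orderIso_apply_eq φ hk⟩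

lemma eq_of_apply_eq_orderIso {i i' : ι} [Nontrivial (δ i)] {k k' : κ}
    (G : δ i ≃o ε k) (G' : δ i' ≃o ε k') (hG : ∀ f, φ f k = G (f i))
    (hG' : ∀ f, φ f k' = G' (f i')) (hk : k = k') : i = i' := by
  subst hk
  by_contra hne
  obtain ⟨a, ha⟩ := exists_ne (⊥ : δ i)
  have h := (hG (single i a)).symm.trans (hG' (single i a))
  rw [single_apply_self, single_apply_of_ne (Ne.symm hne), map_bot, map_eq_bot_iff] at h
  exact ha h

end OrderIso

theorem exists_equiv_orderIso [Finite ι] [∀ i, LinearOrder (δ i)] [∀ i, OrderBot (δ i)]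
    (φ : (∀ i, δ i) ≃o ∀ i, δ i) :
    ∃ (F : ι ≃ ι) (G : ∀ i, δ i ≃o δ (F i)), ∀ f i, φ f (F i) = G i (f i) := by
  classical
  have hcoord : ∀ i, ∃ k, (Subsingleton (δ i) → k = i) ∧
      ∃ G : δ i ≃o δ k, ∀ f, φ f k = G (f i) := by
    intro i
    rcases subsingleton_or_nontrivial (δ i) with hi | hi
    · exact ⟨i, fun _ => rfl, OrderIso.refl _, fun _ => Subsingleton.elim _ _⟩
    · obtain ⟨k, hk⟩ := exists_orderIso_apply_eq_of_nontrivial φ i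
      exact ⟨k, fun h => (not_subsingleton _ h).elim, hk⟩
  choose F hFfix G hG using hcoord
  have hF : Function.Injective F := by
    intro i i' h
    rcases subsingleton_or_nontrivial (δ i) with hi | hi
    · rcases subsingleton_or_nontrivial (δ i') with hi' | hi'
      · rw [← hFfix i hi, h, hFfix i' hi']
      · exact (eq_of_apply_eq_orderIso φ (G i') (G i) (hG i') (hG i) h.symm).symm
    · exact eq_of_apply_eq_orderIso φ (G i) (G i') (hG i) (hG i') h
  exact ⟨Equiv.ofBijective F (Finite.injective_iff_bijective.mp hF), G, fun f i => hG i f⟩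

end ChainProduct

lemma Equiv.Perm.exists_eq_sigmaCongrRight {ι : Type*} {β : ι → Type*} (F : Perm (Σ i, β i))
    (hF : ∀ p, (F p).1 = p.1) : ∃ σ : ∀ i, Perm (β i), F = Perm.sigmaCongrRight σ := by
  have hfiber : ∀ (F : Perm (Σ i, β i)), (∀ p, (F p).1 = p.1) →
      ∀ i (b : β i), ∃ b', F ⟨i, b⟩ = ⟨i, b'⟩ := by
    intro F hF i b
    rcases hb : F ⟨i, b⟩ with ⟨i', b'⟩
    obtain rfl : i' = i := by simpa [hb] using hF ⟨i, b⟩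
    exact ⟨b', rfl⟩
  have hF' : ∀ p, (F.symm p).1 = p.1 := fun p => by
    simpa using (hF (F.symm p)).symm
  choose t ht using hfiber F hF
  choose s hs using hfiber F.symm hF'
  refine ⟨fun i => ⟨t i, s i, fun b => ?_, fun b => ?_⟩, Equiv.ext fun ⟨i, b⟩ => ht i b⟩
  · have h := hs i (t i b)
    rw [← ht, F.symm_apply_apply] at h
    exact (sigma_mk_injective h).symm
  · have h := ht i (s i b)
    rw [← hs, F.apply_symm_apply] at h
    exact (sigma_mk_injective h).symm

def OrderIso.piCurry {ι : Type*} {κ : ι → Type*} (α : ∀ i, κ i → Type*) [∀ i j, LE (α i j)] :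
    (∀ p : Σ i, κ i, α p.1 p.2) ≃o ∀ i j, α i j where
  toEquiv := Equiv.piCurry α
  map_rel_iff' := ⟨fun h p => h p.1 p.2, fun h i j => h ⟨i, j⟩⟩

/-- Every automorphism of a finite product of powers of pairwise
non-isomorphic chains `∏_{i=1}^m C_i^{n_i}` decomposes into automorphisms of the factors
`C_i^{n_i}`, each of which permutes coordinates. -/
theorem stmt_18 {m : ℕ} (α : Fin m → Type*) [∀ i, Fintype (α i)] [∀ i, LinearOrder (α i)]
    (hne : ∀ i j : Fin m, i ≠ j → IsEmpty (α i ≃o α j))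
    (n : Fin m → ℕ)
    (φ : ((i : Fin m) → Fin (n i) → α i) ≃o ((i : Fin m) → Fin (n i) → α i)) :
    ∃ σ : (i : Fin m) → Equiv.Perm (Fin (n i)),
      ∀ (f : (i : Fin m) → Fin (n i) → α i) (i : Fin m) (j : Fin (n i)),
        φ f i j = f i ((σ i).symm j) := by
  classical
  let Φ := OrderIso.piCurry fun i (_ : Fin (n i)) => α i
  rcases isEmpty_or_nonempty ((p : Σ i, Fin (n i)) → α p.1) with hempty | ⟨⟨g⟩⟩
  · exact ⟨1, fun f => (hempty.false (Φ.symm f)).elim⟩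
  let : ∀ p : Σ i, Fin (n i), OrderBot (α p.1) := fun p =>
    haveI : Nonempty (α p.1) := ⟨g p⟩
    Fintype.toOrderBot _
  obtain ⟨F, G, hG⟩ := ChainProduct.exists_equiv_orderIso (Φ.trans (φ.trans Φ.symm))
  obtain ⟨σ, rfl⟩ := Equiv.Perm.exists_eq_sigmaCongrRight F fun p =>
    by_contra fun h => (hne _ _ (Ne.symm h)).false (G p)
  refine ⟨σ, fun f i j => ?_⟩
  have h : φ f i (σ i ((σ i).symm j)) = G ⟨i, (σ i).symm j⟩ (f i ((σ i).symm j)) :=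
    hG (Φ.symm f) ⟨i, (σ i).symm j⟩
  -- an automorphism of a finite chain is the identity
  rwa [Equiv.apply_symm_apply, Subsingleton.elim (G _) (OrderIso.refl _)] at h
end

section
/- Every equivalence class of down-sets structure under the action of the wreath product S_k ≀ S_t on subsets of the grid [k]×[t] contains a unique down-set of the product order k̄ × t̄; consequently the quotient B_{kt}/(S_k ≀ S_t) is order-isomorphic to the lattice L(k,t) of integer sequences 0 ≤ a_1 ≤ ... ≤ a_t ≤ k under componentwise order, which in turn is isomorphic to the quotient of the t-th power of a (k+1)-chain by S_t permuting coordinates. -/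
open PaperSCD

/-- `L(k,t)`: weakly increasing sequences `0 ≤ a_1 ≤ ⋯ ≤ a_t ≤ k`. -/
def Lkt (k t : ℕ) := {a : Fin t → Fin (k + 1) // Monotone a}

/-- Orbit relation of `S_t` permuting the coordinates of the `t`-th power of a
`(k+1)`-element chain. -/
def relChainPow (k t : ℕ) : (Fin t → Fin (k + 1)) → (Fin t → Fin (k + 1)) → Prop :=
  fun f g => ∃ τ : Equiv.Perm (Fin t), actF τ f = g

/-!
The wreath product rearranges each column arbitrarily and permutes the columns, so the orbit
of `X ⊆ [k] × [t]` is determined by the `S_t`-orbit of its tuple of column sizes, a point of the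
`t`-th power of the chain `0 < 1 < ⋯ < k`. A down-set of `k̄ × t̄` is determined by its column
sizes, which must decrease; a tuple has exactly one decreasing and one increasing
rearrangement, so each orbit contains exactly one down-set and orbits correspond to sorted
tuples. Inclusion of representatives becomes pointwise comparison of tuples, and for sorted
tuples a pointwise comparison of some rearrangements already forces the pointwise comparison,
by counting the entries below a given value.
-/

namespace WreathGrid

open Finset

theorem quot_mk_eq_mk_iff {α : Type*} {r : α → α → Prop} (hr : Equivalence r) {a b : α} :
    Quot.mk r a = Quot.mk r b ↔ r a b :=
  Quot.eq.trans hr.eqvGen_iff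

theorem exists_perm_image_eq {α : Type*} [Fintype α] [DecidableEq α] {A B : Finset α}
    (h : #A = #B) : ∃ g : Equiv.Perm α, A.image g = B := by
  let e : {x // x ∈ A} ≃ {x // x ∈ B} := equivOfCardEq h
  refine ⟨e.extendSubtype, eq_of_subset_of_card_le ?_ ?_⟩
  · intro b hb
    obtain ⟨a, ha, rfl⟩ := mem_image.1 hb
    exact e.extendSubtype_mem a ha
  · rw [card_image_of_injective _ (Equiv.injective _), h]

section Tuples

variable {n : ℕ} {α : Type*}

theorem card_filter_comp_perm (σ : Equiv.Perm (Fin n)) (p : Fin n → Prop) [DecidablePred p] :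
    #{i | p (σ i)} = #{i | p i} :=
  card_equiv σ (by simp)

theorem le_of_monotone_of_comp_perm_le [LinearOrder α] {a b : Fin n → α}
    (ha : Monotone a) (hb : Monotone b) {σ π : Equiv.Perm (Fin n)}
    (h : ∀ i, a (σ i) ≤ b (π i)) (r : Fin n) : a r ≤ b r := by
  classical
  by_contra! hr
  -- count the entries below `a r`: at least `r + 1` for `b`, at most `r` for `a`
  have hb_count : (r : ℕ) < #{i | b i < a r} :=
    (Tuple.lt_card_lt_iff_apply_lt_of_monotone hb).2 hr
  have ha_count : ¬ (r : ℕ) < #{i | a i < a r} := by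
    rw [Tuple.lt_card_lt_iff_apply_lt_of_monotone ha]
    exact lt_irrefl _
  have hcomp : #{i | b (π i) < a r} ≤ #{i | a (σ i) < a r} :=
    card_le_card fun i => by
      simp only [mem_filter, mem_univ, true_and]
      exact (h i).trans_lt
  rw [card_filter_comp_perm π (fun i => b i < a r),
    card_filter_comp_perm σ (fun i => a i < a r)] at hcomp
  omega

end Tuples

section ChainPower

variable {k t : ℕ}

theorem relChainPow_iff {f g : Fin t → Fin (k + 1)} :
    relChainPow k t f g ↔ ∃ σ : Equiv.Perm (Fin t), g = f ∘ σ :=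
  ⟨fun ⟨τ, h⟩ => ⟨τ.symm, h.symm⟩, fun ⟨σ, h⟩ => ⟨σ.symm, h.symm⟩⟩

theorem relChainPow_equivalence : Equivalence (relChainPow k t) where
  refl f := relChainPow_iff.2 ⟨1, rfl⟩
  symm {f g} h := by
    obtain ⟨σ, rfl⟩ := relChainPow_iff.1 h
    exact relChainPow_iff.2 ⟨σ.symm, by ext; simp⟩
  trans {f g h} hfg hgh := by
    obtain ⟨σ, rfl⟩ := relChainPow_iff.1 hfg
    obtain ⟨π, rfl⟩ := relChainPow_iff.1 hgh
    exact relChainPow_iff.2 ⟨σ * π, rfl⟩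

def Lkt.toOrbit (a : Lkt k t) : Quot (relChainPow k t) :=
  Quot.mk _ a.1

theorem Lkt.toOrbit_bijective : Function.Bijective (Lkt.toOrbit (k := k) (t := t)) := by
  refine ⟨fun a b hab => Subtype.ext ?_, fun q => ?_⟩
  · obtain ⟨σ, hσ⟩ := relChainPow_iff.1 ((quot_mk_eq_mk_iff relChainPow_equivalence).1 hab)
    have hmono : Monotone (a.1 ∘ σ) := hσ ▸ b.2
    exact (Tuple.unique_monotone (τ := 1) hmono a.2).symm.trans hσ.symm
  · induction q using Quot.ind with | mk f => ?_
    refine ⟨⟨f ∘ Tuple.sort f, Tuple.monotone_sort f⟩, Quot.sound ?_⟩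
    exact relChainPow_equivalence.symm (relChainPow_iff.2 ⟨_, rfl⟩)

theorem Lkt.le_iff_qle_toOrbit {a b : Lkt k t} :
    (∀ r, a.1 r ≤ b.1 r) ↔ qle (relChainPow k t) (· ≤ ·) (Lkt.toOrbit a) (Lkt.toOrbit b) := by
  refine ⟨fun h => ⟨a.1, b.1, rfl, rfl, h⟩, ?_⟩
  rintro ⟨x, y, hx, hy, hxy⟩
  obtain ⟨σ, rfl⟩ := relChainPow_iff.1 ((quot_mk_eq_mk_iff relChainPow_equivalence).1 hx.symm)
  obtain ⟨π, rfl⟩ := relChainPow_iff.1 ((quot_mk_eq_mk_iff relChainPow_equivalence).1 hy.symm)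
  exact le_of_monotone_of_comp_perm_le a.2 b.2 hxy

end ChainPower

section Grid

variable {k t : ℕ}

theorem mem_col {X : Finset (Fin k × Fin t)} {i : Fin k} {r : Fin t} :
    i ∈ col X r ↔ (i, r) ∈ X := by
  simp [col]

theorem col_eq_filter (X : Finset (Fin k × Fin t)) (r : Fin t) :
    col X r = ({i | (i, r) ∈ X} : Finset (Fin k)) := by
  ext i
  simp [mem_col]

theorem ext_col {X Y : Finset (Fin k × Fin t)} (h : ∀ r, col X r = col Y r) : X = Y := by
  ext ⟨i, r⟩
  rw [← mem_col, ← mem_col, h]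

theorem col_image_wrPerm (X : Finset (Fin k × Fin t)) (ρ : Fin t → Equiv.Perm (Fin k))
    (τ : Equiv.Perm (Fin t)) (s : Fin t) :
    col (X.image (wrPerm ρ τ)) s = (col X (τ.symm s)).image (ρ (τ.symm s)) := by
  ext i
  simp only [mem_col, mem_image, Prod.exists, wrPerm, Equiv.coe_fn_mk, Prod.mk.injEq]
  constructor
  · rintro ⟨j, r, hjr, rfl, rfl⟩
    exact ⟨j, by simpa using hjr, by simp⟩
  · rintro ⟨j, hj, rfl⟩
    exact ⟨j, τ.symm s, hj, rfl, by simp⟩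

def colCard (X : Finset (Fin k × Fin t)) (r : Fin t) : Fin (k + 1) :=
  ⟨#(col X r), Nat.lt_succ_of_le (by simpa using card_le_univ (col X r))⟩

theorem colCard_val (X : Finset (Fin k × Fin t)) (r : Fin t) :
    (colCard X r : ℕ) = #{i | (i, r) ∈ X} :=
  congrArg card (col_eq_filter X r)

theorem relW_top_iff {X Y : Finset (Fin k × Fin t)} :
    relW ⊤ ⊤ X Y ↔ relChainPow k t (colCard X) (colCard Y) := by
  constructor
  · rintro ⟨_, ⟨ρ, τ, -, -, rfl⟩, rfl⟩
    refine ⟨τ, funext fun s => Fin.ext ?_⟩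
    simp only [actF, colCard, col_image_wrPerm, card_image_of_injective _ (Equiv.injective _)]
  · rintro ⟨τ, hτ⟩
    have hcard r : #(col X r) = #(col Y (τ r)) := by
      simpa [actF, colCard] using congrArg (fun f => (f (τ r) : ℕ)) hτ
    choose ρ hρ using fun r => exists_perm_image_eq (hcard r)
    refine ⟨wrPerm ρ τ, ⟨ρ, τ, fun _ => trivial, trivial, rfl⟩, ext_col fun s => ?_⟩
    rw [col_image_wrPerm, hρ, Equiv.apply_symm_apply]

theorem relW_top_equivalence :
    Equivalence (relW ⊤ ⊤ : Finset (Fin k × Fin t) → Finset (Fin k × Fin t) → Prop) where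
  refl _ := relW_top_iff.2 (relChainPow_equivalence.refl _)
  symm h := relW_top_iff.2 (relChainPow_equivalence.symm (relW_top_iff.1 h))
  trans h₁ h₂ := relW_top_iff.2 (relChainPow_equivalence.trans (relW_top_iff.1 h₁)
    (relW_top_iff.1 h₂))

def ofColCard (h : Fin t → Fin (k + 1)) : Finset (Fin k × Fin t) :=
  {p | (p.1 : ℕ) < h p.2}

theorem colCard_ofColCard (h : Fin t → Fin (k + 1)) : colCard (ofColCard h) = h := by
  funext r
  ext
  simp only [colCard_val, ofColCard, mem_filter, mem_univ, true_and, Fin.card_filter_val_lt]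
  exact min_eq_right (Nat.lt_succ_iff.1 (h r).2)

theorem ofColCard_mono {h h' : Fin t → Fin (k + 1)} (hle : h ≤ h') :
    ofColCard h ⊆ ofColCard h' := by
  intro p hp
  simp only [ofColCard, mem_filter, mem_univ, true_and] at hp ⊢
  exact hp.trans_le (hle p.2)

theorem colCard_mono {X Y : Finset (Fin k × Fin t)} (hXY : X ⊆ Y) : colCard X ≤ colCard Y :=
  fun _ => card_le_card fun _ hi => mem_col.2 (hXY (mem_col.1 hi))

theorem isLowerSet_ofColCard {h : Fin t → Fin (k + 1)} (hh : Antitone h) :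
    IsLowerSet (ofColCard h : Set (Fin k × Fin t)) := by
  rintro ⟨i, _⟩ ⟨i', _⟩ ⟨hi, hr⟩ hmem
  simp only [ofColCard, coe_filter, mem_univ, true_and, Set.mem_ofPred_eq] at hmem ⊢
  exact (Fin.val_le_of_le hi).trans_lt (hmem.trans_le (hh hr))

theorem _root_.IsLowerSet.antitone_colCard {Y : Finset (Fin k × Fin t)}
    (hY : IsLowerSet (Y : Set (Fin k × Fin t))) : Antitone (colCard Y) :=
  fun r r' hr => card_le_card fun i hi =>
    mem_col.2 (hY (show (i, r) ≤ (i, r') from ⟨le_rfl, hr⟩) (mem_col.1 hi))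

theorem _root_.IsLowerSet.ofColCard_colCard {Y : Finset (Fin k × Fin t)}
    (hY : IsLowerSet (Y : Set (Fin k × Fin t))) : ofColCard (colCard Y) = Y := by
  ext ⟨i, r⟩
  simp only [ofColCard, mem_filter, mem_univ, true_and, colCard_val]
  exact Fin.lt_card_filter_univ_iff_apply_of_imp (fun i => (i, r) ∈ Y)
    fun i j hji hi => hY (show (j, r) ≤ (i, r) from ⟨hji, le_rfl⟩) hi

theorem eq_of_relW_of_isLowerSet {Y₁ Y₂ : Finset (Fin k × Fin t)} (hrel : relW ⊤ ⊤ Y₁ Y₂)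
    (hY₁ : IsLowerSet (Y₁ : Set (Fin k × Fin t))) (hY₂ : IsLowerSet (Y₂ : Set (Fin k × Fin t))) :
    Y₁ = Y₂ := by
  obtain ⟨σ, hσ⟩ := relChainPow_iff.1 (relW_top_iff.1 hrel)
  have hanti : Antitone (colCard Y₁ ∘ σ) := hσ ▸ hY₂.antitone_colCard
  have hcard : colCard Y₁ = colCard Y₂ :=
    (hσ.trans (Tuple.unique_antitone (τ := 1) hanti hY₁.antitone_colCard)).symm
  rw [← hY₁.ofColCard_colCard, ← hY₂.ofColCard_colCard, hcard]

theorem existsUnique_relW_isLowerSet (X : Finset (Fin k × Fin t)) :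
    ∃! Y : Finset (Fin k × Fin t), relW ⊤ ⊤ X Y ∧ IsLowerSet (Y : Set (Fin k × Fin t)) := by
  let σ := Tuple.sort (OrderDual.toDual ∘ colCard X)
  have hanti : Antitone (colCard X ∘ σ) := Tuple.monotone_sort (OrderDual.toDual ∘ colCard X)
  have hrel : relW ⊤ ⊤ X (ofColCard (colCard X ∘ σ)) :=
    relW_top_iff.2 (relChainPow_iff.2 ⟨σ, colCard_ofColCard _⟩)
  refine ⟨_, ⟨hrel, isLowerSet_ofColCard hanti⟩, fun Y ⟨hXY, hY⟩ => ?_⟩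
  exact eq_of_relW_of_isLowerSet (relW_top_equivalence.trans (relW_top_equivalence.symm hrel) hXY)
    (isLowerSet_ofColCard hanti) hY |>.symm

def orbitColCard : Quot (relW (⊤ : Subgroup (Equiv.Perm (Fin k)))
    (⊤ : Subgroup (Equiv.Perm (Fin t)))) → Quot (relChainPow k t) :=
  Quot.map colCard fun _ _ => relW_top_iff.1

theorem orbitColCard_mk (X : Finset (Fin k × Fin t)) :
    orbitColCard (Quot.mk _ X) = Quot.mk _ (colCard X) :=
  rfl

theorem orbitColCard_bijective : Function.Bijective (orbitColCard (k := k) (t := t)) := by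
  refine ⟨fun a b hab => ?_, fun q => ?_⟩
  · induction a using Quot.ind with | mk X => ?_
    induction b using Quot.ind with | mk Y => ?_
    exact Quot.sound (relW_top_iff.2 ((quot_mk_eq_mk_iff relChainPow_equivalence).1 hab))
  · induction q using Quot.ind with | mk h => ?_
    exact ⟨Quot.mk _ (ofColCard h), congrArg _ (colCard_ofColCard h)⟩

theorem qle_iff_qle_orbitColCard
    {a b : Quot (relW (⊤ : Subgroup (Equiv.Perm (Fin k))) (⊤ : Subgroup (Equiv.Perm (Fin t))))} :
    qle (relW ⊤ ⊤) (· ⊆ ·) a b ↔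
      qle (relChainPow k t) (· ≤ ·) (orbitColCard a) (orbitColCard b) := by
  constructor
  · rintro ⟨X, Y, rfl, rfl, hXY⟩
    exact ⟨colCard X, colCard Y, rfl, rfl, colCard_mono hXY⟩
  · rintro ⟨f, g, hf, hg, hfg⟩
    refine ⟨ofColCard f, ofColCard g, ?_, ?_, ofColCard_mono hfg⟩
    · exact orbitColCard_bijective.1 (by rw [orbitColCard_mk, colCard_ofColCard, hf])
    · exact orbitColCard_bijective.1 (by rw [orbitColCard_mk, colCard_ofColCard, hg])

end Grid

end WreathGrid

open WreathGrid

/-- Every orbit of `S_k ≀ S_t` on subsets of the grid `[k] × [t]` contains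
a unique down-set of the product order; consequently `B_{kt}/(S_k ≀ S_t)` is
order-isomorphic to `L(k,t)`, which in turn is isomorphic to the quotient of the `t`-th
power of a `(k+1)`-element chain by `S_t` permuting coordinates. -/
theorem stmt_19 (k t : ℕ) :
    (∀ X : Finset (Fin k × Fin t), ∃! Y : Finset (Fin k × Fin t),
      relW (⊤ : Subgroup (Equiv.Perm (Fin k))) (⊤ : Subgroup (Equiv.Perm (Fin t))) X Y ∧
        IsLowerSet (Y : Set (Fin k × Fin t))) ∧
    (∃ F : Quot (relW (⊤ : Subgroup (Equiv.Perm (Fin k)))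
          (⊤ : Subgroup (Equiv.Perm (Fin t)))) → Lkt k t,
      Function.Bijective F ∧
      ∀ a b, qle (relW ⊤ ⊤) (· ⊆ ·) a b ↔ ∀ r, (F a).1 r ≤ (F b).1 r) ∧
    (∃ G : Lkt k t → Quot (relChainPow k t),
      Function.Bijective G ∧
      ∀ a b : Lkt k t, (∀ r, a.1 r ≤ b.1 r) ↔ qle (relChainPow k t) (· ≤ ·) (G a) (G b)) := by
  let G := Equiv.ofBijective _ (Lkt.toOrbit_bijective (k := k) (t := t))
  refine ⟨existsUnique_relW_isLowerSet, ⟨G.symm ∘ orbitColCard,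
    G.symm.bijective.comp orbitColCard_bijective, fun a b => ?_⟩,
    ⟨Lkt.toOrbit, Lkt.toOrbit_bijective, fun a b => Lkt.le_iff_qle_toOrbit⟩⟩
  rw [qle_iff_qle_orbitColCard, Lkt.le_iff_qle_toOrbit]
  simp only [G, Function.comp_apply, Equiv.ofBijective_apply_symm_apply]
end
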